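/- For every n ≥ 0, L_n ∘ R_n = (t_n)^{n+1} and R_n ∘ L_n = (t'_n)^{n+1}. Consequently, L ∘ R is the identity if and only if the duplicial functor CC_𝕋(N,M) is cyclic (i.e. (t_n)^{n+1} = id in every degree), and R ∘ L is the identity if and only if CC_𝕊^op(N,M) is cyclic. -/

import Mathlib

/-!
`R_n` and `L_n` peel off factors at opposite ends: `R_{n+1} = S R_n ∘ r_{0,n+1}`, whereas
`L_{n+1}` at `W` ends with `L_n` at `TW`. Passing from `(M, ρ)` to `(TM, (χM) ∘ (Tρ))` shifts
the degree by one and reconciles the two: `R_n` of the shifted pair is `χ̂^{n+1} ∘ T R_n`, and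
`R_{n+1} = S^{n+1}ρ ∘ R_n` of the shifted pair; `t_n` of the shifted pair is `t_{n+1}`, and
`S^{n+1}ρ` intertwines `t'_n` of the shifted pair with `t'_{n+1}`. Naturality of `χ` and `λ` and
an induction on `n` over all pairs `(M, ρ)` then give `L_n ∘ R_n = t_n^{n+1}` and
`R_n ∘ L_n = t'_n^{n+1}`.
-/

open CategoryTheory

namespace Stmt15

variable {B X Y : Type*} [Category B] [Category X] [Category Y]

/-- Iterated application of an endofunctor. -/
def iter (G : B ⥤ B) : ℕ → B → B
  | 0, Z => Z
  | n + 1, Z => G.obj (iter G n Z)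

lemma iter_comm (G : B ⥤ B) (n : ℕ) (Z : B) :
    iter G n (G.obj Z) = G.obj (iter G n Z) := by
  induction n with
  | zero => rfl
  | succ n ih => simp [iter, ih]

/-- Composition power of an endomorphism. -/
def cpow {C : Type*} [Category C] {Z : C} (e : Z ⟶ Z) : ℕ → (Z ⟶ Z)
  | 0 => 𝟙 Z
  | k + 1 => e ≫ cpow e k

section

variable (T S : Comonad B)
  (χ : (S.toFunctor ⋙ T.toFunctor : B ⥤ B) ⟶ (T.toFunctor ⋙ S.toFunctor : B ⥤ B))

/-- `χ̂^k : TS^k → S^kT` obtained by repeated application of `χ`, componentwise. -/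
def chihat : (k : ℕ) → (Z : B) →
    (T.obj (iter S.toFunctor k Z) ⟶ iter S.toFunctor k (T.obj Z))
  | 0, Z => 𝟙 (T.obj Z)
  | k + 1, Z => χ.app (iter S.toFunctor k Z) ≫ S.map (chihat k Z)

variable (M : X ⥤ B) (ρ : (M ⋙ T.toFunctor : X ⥤ B) ⟶ (M ⋙ S.toFunctor : X ⥤ B))

/-- The composite `(χ^n M) ∘ (T^n ρ) : T^{n+1}M ⟶ ST^nM`, componentwise. -/
def gmap (x : X) : (n : ℕ) →
    (iter T.toFunctor (n + 1) (M.obj x) ⟶ S.obj (iter T.toFunctor n (M.obj x)))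
  | 0 => ρ.app x
  | n + 1 => T.map (gmap x n) ≫ χ.app (iter T.toFunctor n (M.obj x))

/-- The composite `(S^n ρ) ∘ (χ̂^n M) : TS^nM ⟶ S^{n+1}M`, componentwise. -/
def hmap (x : X) : (n : ℕ) →
    (T.obj (iter S.toFunctor n (M.obj x)) ⟶ iter S.toFunctor (n + 1) (M.obj x))
  | 0 => ρ.app x
  | n + 1 => χ.app (iter S.toFunctor n (M.obj x)) ≫ S.map (hmap x n)

/-- `R_n := r_{n,n}∘⋯∘r_{0,n}` with `r_{i,n} := (S^iχ^{n-i}M)∘(S^iT^{n-i}ρ)`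
(before applying `N`), defined via `R_n = S(R_{n-1}) ∘ r_{0,n}`. -/
def Rmap (x : X) : (n : ℕ) →
    (iter T.toFunctor (n + 1) (M.obj x) ⟶ iter S.toFunctor (n + 1) (M.obj x))
  | 0 => ρ.app x
  | n + 1 => gmap T S χ M ρ x (n + 1) ≫ S.map (Rmap x n)

variable (N : B ⥤ Y) (lam : (S.toFunctor ⋙ N : B ⥤ Y) ⟶ (T.toFunctor ⋙ N : B ⥤ Y))

/-- `L_n := l_{n,n}∘⋯∘l_{0,n}` with `l_{i,n} := (Nχ̂^{n-i}T^iM)∘(λS^{n-i}T^iM)`,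
defined recursively by peeling off `l_{0,n}`. -/
def Lmap : (n : ℕ) → (W : B) →
    (N.obj (iter S.toFunctor (n + 1) W) ⟶ N.obj (iter T.toFunctor (n + 1) W))
  | 0, W => lam.app W ≫ N.map (chihat T S χ 0 W)
  | n + 1, W =>
      lam.app (iter S.toFunctor (n + 1) W) ≫ N.map (chihat T S χ (n + 1) W) ≫
        Lmap n (T.obj W) ≫ eqToHom (by simp [iter, iter_comm])

/-- The duplicial operator `t_n` on `CC_𝕋(N,M)_n`. -/
def tT (x : X) (n : ℕ) :
    N.obj (iter T.toFunctor (n + 1) (M.obj x)) ⟶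
      N.obj (iter T.toFunctor (n + 1) (M.obj x)) :=
  N.map (gmap T S χ M ρ x n) ≫ lam.app (iter T.toFunctor n (M.obj x))

/-- The duplicial operator `t'_n` on `CC_𝕊^op(N,M)_n`. -/
def tS (x : X) (n : ℕ) :
    N.obj (iter S.toFunctor (n + 1) (M.obj x)) ⟶
      N.obj (iter S.toFunctor (n + 1) (M.obj x)) :=
  lam.app (iter S.toFunctor n (M.obj x)) ≫ N.map (hmap T S χ M ρ x n)

end

lemma cpow_comp_eq_comp_cpow {C : Type*} [Category C] {Z W : C} {e : Z ⟶ Z} {f : W ⟶ W}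
    {φ : Z ⟶ W} (h : e ≫ φ = φ ≫ f) (k : ℕ) : cpow e k ≫ φ = φ ≫ cpow f k := by
  induction k with
  | zero => simp [cpow]
  | succ k ih => rw [cpow, cpow, Category.assoc, ih, reassoc_of% h]

-- Lets `simp` cancel the `eqToHom`s between definitionally equal iterates.
attribute [reducible] iter

section Shift

variable (T S : Comonad B)
  (χ : (S.toFunctor ⋙ T.toFunctor : B ⥤ B) ⟶ (T.toFunctor ⋙ S.toFunctor : B ⥤ B))
  (M : X ⥤ B) (ρ : (M ⋙ T.toFunctor : X ⥤ B) ⟶ (M ⋙ S.toFunctor : X ⥤ B))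

/-- The structure map `(χM) ∘ (Tρ) : TTM ⟶ STM` on `TM`. -/
def shiftRho :
    ((M ⋙ T.toFunctor) ⋙ T.toFunctor : X ⥤ B) ⟶ (M ⋙ T.toFunctor) ⋙ S.toFunctor :=
  Functor.whiskerRight ρ T.toFunctor ≫ Functor.whiskerLeft M χ

def iterMapRho (x : X) : (n : ℕ) →
    (iter S.toFunctor n (T.obj (M.obj x)) ⟶ iter S.toFunctor (n + 1) (M.obj x))
  | 0 => ρ.app x
  | n + 1 => S.map (iterMapRho x n)

lemma gmap_shiftRho (x : X) (n : ℕ) :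
    gmap T S χ (M ⋙ T.toFunctor) (shiftRho T S χ M ρ) x n
      = eqToHom (iter_comm T.toFunctor (n + 1) (M.obj x)) ≫ gmap T S χ M ρ x (n + 1)
          ≫ S.map (eqToHom (iter_comm T.toFunctor n (M.obj x)).symm) := by
  induction n with
  | zero => simp [gmap, shiftRho]
  | succ n ih =>
    rw [gmap, ih]
    erw [NatTrans.congr χ (iter_comm T.toFunctor n (M.obj x))]
    simp [gmap, eqToHom_map]

lemma map_Rmap_comp_chihat (x : X) (n : ℕ) :
    T.map (Rmap T S χ M ρ x n) ≫ chihat T S χ (n + 1) (M.obj x)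
      = eqToHom (iter_comm T.toFunctor (n + 1) (M.obj x)).symm
          ≫ Rmap T S χ (M ⋙ T.toFunctor) (shiftRho T S χ M ρ) x n := by
  induction n with
  | zero => simp [chihat, Rmap, shiftRho]
  | succ n ih =>
    rw [Rmap, chihat, Rmap, gmap_shiftRho, Functor.map_comp, Category.assoc,
      ← Category.assoc (T.map (S.map _)), ← Functor.comp_map, χ.naturality, Category.assoc,
      Functor.comp_map, ← Functor.map_comp, ih]
    simp [gmap, eqToHom_map]

lemma iterMapRho_comp_chihat (x : X) (n : ℕ) :
    chihat T S χ n (M.obj x) ≫ iterMapRho T S M ρ x n = hmap T S χ M ρ x n := by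
  induction n with
  | zero => simp [chihat, iterMapRho, hmap]
  | succ n ih => rw [chihat, iterMapRho, Category.assoc, ← S.map_comp, ih, hmap]

lemma hmap_shiftRho_comp_iterMapRho (x : X) (n : ℕ) :
    hmap T S χ (M ⋙ T.toFunctor) (shiftRho T S χ M ρ) x n
        ≫ S.map (iterMapRho T S M ρ x n)
      = T.map (iterMapRho T S M ρ x n) ≫ hmap T S χ M ρ x (n + 1) := by
  induction n with
  | zero => simp [hmap, shiftRho, iterMapRho]
  | succ n ih =>
    have nat := χ.naturality (iterMapRho T S M ρ x n)
    simp only [Functor.comp_map] at nat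
    rw [hmap, iterMapRho, Category.assoc, ← S.map_comp, ih, S.map_comp,
      hmap.eq_2 _ _ _ _ _ _ (n + 1), ← Category.assoc, ← Category.assoc, nat]
    rfl

lemma Rmap_succ_eq_Rmap_shiftRho (x : X) (n : ℕ) :
    Rmap T S χ M ρ x (n + 1)
      = eqToHom (iter_comm T.toFunctor (n + 1) (M.obj x)).symm
          ≫ Rmap T S χ (M ⋙ T.toFunctor) (shiftRho T S χ M ρ) x n
          ≫ iterMapRho T S M ρ x (n + 1) := by
  induction n with
  | zero => simp [Rmap, gmap, shiftRho, iterMapRho]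
  | succ n ih =>
    rw [Rmap, ih, Rmap.eq_2 _ _ _ _ _ _ n, gmap_shiftRho]
    simp [iterMapRho, eqToHom_map]

variable (N : B ⥤ Y) (lam : (S.toFunctor ⋙ N : B ⥤ Y) ⟶ (T.toFunctor ⋙ N : B ⥤ Y))

lemma tT_shiftRho_comp_eqToHom (x : X) (n : ℕ) :
    tT T S χ (M ⋙ T.toFunctor) (shiftRho T S χ M ρ) N lam x n
        ≫ eqToHom (congrArg N.obj (iter_comm T.toFunctor (n + 1) (M.obj x)))
      = eqToHom (congrArg N.obj (iter_comm T.toFunctor (n + 1) (M.obj x)))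
        ≫ tT T S χ M ρ N lam x (n + 1) := by
  rw [tT, tT, gmap_shiftRho]
  erw [NatTrans.congr lam (iter_comm T.toFunctor n (M.obj x))]
  simp [eqToHom_map]

lemma tS_shiftRho_comp_map_iterMapRho (x : X) (n : ℕ) :
    tS T S χ (M ⋙ T.toFunctor) (shiftRho T S χ M ρ) N lam x n
        ≫ N.map (iterMapRho T S M ρ x (n + 1))
      = N.map (iterMapRho T S M ρ x (n + 1)) ≫ tS T S χ M ρ N lam x (n + 1) := by
  have nat := lam.naturality (iterMapRho T S M ρ x n)
  simp only [Functor.comp_map] at nat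
  rw [tS, tS, iterMapRho, reassoc_of% nat, Category.assoc, ← N.map_comp, ← N.map_comp,
    hmap_shiftRho_comp_iterMapRho]
  rfl

lemma map_Rmap_comp_Lmap (x : X) (n : ℕ) :
    N.map (Rmap T S χ M ρ x n) ≫ Lmap T S χ N lam n (M.obj x)
      = cpow (tT T S χ M ρ N lam x n) (n + 1) := by
  induction n generalizing M ρ with
  | zero => simp [Rmap, Lmap, cpow, tT, gmap, chihat]
  | succ n ih =>
    have nat := lam.naturality (Rmap T S χ M ρ x n)
    simp only [Functor.comp_map] at nat
    rw [Rmap, Lmap, N.map_comp, Category.assoc, reassoc_of% nat, ← N.map_comp_assoc,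
      map_Rmap_comp_chihat, N.map_comp_assoc]
    erw [reassoc_of% (ih (M ⋙ T.toFunctor) (shiftRho T S χ M ρ))]
    rw [cpow_comp_eq_comp_cpow (tT_shiftRho_comp_eqToHom T S χ M ρ N lam x n)]
    simp [cpow, tT, eqToHom_map]

lemma Lmap_comp_map_Rmap (x : X) (n : ℕ) :
    Lmap T S χ N lam n (M.obj x) ≫ N.map (Rmap T S χ M ρ x n)
      = cpow (tS T S χ M ρ N lam x n) (n + 1) := by
  induction n generalizing M ρ with
  | zero => simp [Rmap, Lmap, cpow, tS, hmap, chihat]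
  | succ n ih =>
    rw [Lmap, Rmap_succ_eq_Rmap_shiftRho, N.map_comp, N.map_comp, eqToHom_map]
    simp only [Category.assoc, eqToHom_trans_assoc, eqToHom_refl, Category.id_comp]
    erw [reassoc_of% (ih (M ⋙ T.toFunctor) (shiftRho T S χ M ρ))]
    rw [cpow_comp_eq_comp_cpow (tS_shiftRho_comp_map_iterMapRho T S χ M ρ N lam x n),
      ← N.map_comp_assoc, iterMapRho_comp_chihat, ← Category.assoc]
    rfl

end Shift

theorem LR_RL_cyclicity_general
    (T S : Comonad B)
    (χ : (S.toFunctor ⋙ T.toFunctor : B ⥤ B) ⟶ (T.toFunctor ⋙ S.toFunctor : B ⥤ B))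
    (M : X ⥤ B) (ρ : (M ⋙ T.toFunctor : X ⥤ B) ⟶ (M ⋙ S.toFunctor : X ⥤ B))
    (N : B ⥤ Y) (lam : (S.toFunctor ⋙ N : B ⥤ Y) ⟶ (T.toFunctor ⋙ N : B ⥤ Y)) :
    -- `L_n ∘ R_n = (t_n)^{n+1}`:
    (∀ (n : ℕ) (x : X),
      N.map (Rmap T S χ M ρ x n) ≫ Lmap T S χ N lam n (M.obj x)
      = cpow (tT T S χ M ρ N lam x n) (n + 1)) ∧
    -- `R_n ∘ L_n = (t'_n)^{n+1}`:
    (∀ (n : ℕ) (x : X),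
      Lmap T S χ N lam n (M.obj x) ≫ N.map (Rmap T S χ M ρ x n)
      = cpow (tS T S χ M ρ N lam x n) (n + 1)) ∧
    -- `L ∘ R = id` iff `CC_𝕋(N,M)` is cyclic:
    ((∀ (n : ℕ) (x : X),
        N.map (Rmap T S χ M ρ x n) ≫ Lmap T S χ N lam n (M.obj x)
        = 𝟙 (N.obj (iter T.toFunctor (n + 1) (M.obj x))))
      ↔ (∀ (n : ℕ) (x : X),
        cpow (tT T S χ M ρ N lam x n) (n + 1)
        = 𝟙 (N.obj (iter T.toFunctor (n + 1) (M.obj x))))) ∧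
    -- `R ∘ L = id` iff `CC_𝕊^op(N,M)` is cyclic:
    ((∀ (n : ℕ) (x : X),
        Lmap T S χ N lam n (M.obj x) ≫ N.map (Rmap T S χ M ρ x n)
        = 𝟙 (N.obj (iter S.toFunctor (n + 1) (M.obj x))))
      ↔ (∀ (n : ℕ) (x : X),
        cpow (tS T S χ M ρ N lam x n) (n + 1)
        = 𝟙 (N.obj (iter S.toFunctor (n + 1) (M.obj x))))) := by
  have hLR := fun n x => map_Rmap_comp_Lmap T S χ M ρ N lam x n
  have hRL := fun n x => Lmap_comp_map_Rmap T S χ M ρ N lam x n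
  exact ⟨hLR, hRL, by simp only [hLR], by simp only [hRL]⟩

theorem LR_RL_cyclicity
    (T S : Comonad B)
    (χ : (S.toFunctor ⋙ T.toFunctor : B ⥤ B) ⟶ (T.toFunctor ⋙ S.toFunctor : B ⥤ B))
    -- `χ` is a comonad distributive law:
    (h1 : ∀ Z : B, χ.app Z ≫ S.map (T.ε.app Z) = T.ε.app (S.obj Z))
    (h2 : ∀ Z : B, χ.app Z ≫ S.ε.app (T.obj Z) = T.map (S.ε.app Z))
    (h3 : ∀ Z : B, χ.app Z ≫ S.map (T.δ.app Z)
            = T.δ.app (S.obj Z) ≫ T.map (χ.app Z) ≫ χ.app (T.obj Z))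
    (h4 : ∀ Z : B, χ.app Z ≫ S.δ.app (T.obj Z)
            = T.map (S.δ.app Z) ≫ χ.app (S.obj Z) ≫ S.map (χ.app Z))
    -- `(M, ρ)` is a right `χ`-coalgebra:
    (M : X ⥤ B) (ρ : (M ⋙ T.toFunctor : X ⥤ B) ⟶ (M ⋙ S.toFunctor : X ⥤ B))
    (hρ1 : ∀ x : X,
      ρ.app x ≫ S.δ.app (M.obj x)
      = T.δ.app (M.obj x) ≫ T.map (ρ.app x) ≫ χ.app (M.obj x) ≫ S.map (ρ.app x))
    (hρ2 : ∀ x : X, ρ.app x ≫ S.ε.app (M.obj x) = T.ε.app (M.obj x))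
    -- `(N, λ)` is a left `χ`-coalgebra:
    (N : B ⥤ Y) (lam : (S.toFunctor ⋙ N : B ⥤ Y) ⟶ (T.toFunctor ⋙ N : B ⥤ Y))
    (hlam1 : ∀ Z : B,
      lam.app Z ≫ N.map (T.δ.app Z)
      = N.map (S.δ.app Z) ≫ lam.app (S.obj Z) ≫ N.map (χ.app Z) ≫ lam.app (T.obj Z))
    (hlam2 : ∀ Z : B, lam.app Z ≫ N.map (T.ε.app Z) = N.map (S.ε.app Z)) :
    -- `L_n ∘ R_n = (t_n)^{n+1}`:
    (∀ (n : ℕ) (x : X),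
      N.map (Rmap T S χ M ρ x n) ≫ Lmap T S χ N lam n (M.obj x)
      = cpow (tT T S χ M ρ N lam x n) (n + 1)) ∧
    -- `R_n ∘ L_n = (t'_n)^{n+1}`:
    (∀ (n : ℕ) (x : X),
      Lmap T S χ N lam n (M.obj x) ≫ N.map (Rmap T S χ M ρ x n)
      = cpow (tS T S χ M ρ N lam x n) (n + 1)) ∧
    -- `L ∘ R = id` iff `CC_𝕋(N,M)` is cyclic:
    ((∀ (n : ℕ) (x : X),
        N.map (Rmap T S χ M ρ x n) ≫ Lmap T S χ N lam n (M.obj x)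
        = 𝟙 (N.obj (iter T.toFunctor (n + 1) (M.obj x))))
      ↔ (∀ (n : ℕ) (x : X),
        cpow (tT T S χ M ρ N lam x n) (n + 1)
        = 𝟙 (N.obj (iter T.toFunctor (n + 1) (M.obj x))))) ∧
    -- `R ∘ L = id` iff `CC_𝕊^op(N,M)` is cyclic:
    ((∀ (n : ℕ) (x : X),
        Lmap T S χ N lam n (M.obj x) ≫ N.map (Rmap T S χ M ρ x n)
        = 𝟙 (N.obj (iter S.toFunctor (n + 1) (M.obj x))))
      ↔ (∀ (n : ℕ) (x : X),
        cpow (tS T S χ M ρ N lam x n) (n + 1)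
        = 𝟙 (N.obj (iter S.toFunctor (n + 1) (M.obj x))))) :=
  LR_RL_cyclicity_general T S χ M ρ N lam

end Stmt15
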